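/- Morphism property of the faces-contraction map: let A be a unital associative ℂ-algebra, p, q ≥ 1, α ∈ S_p, β ∈ S_q, and words (A_0,…,A_p) ∈ A^{p+1}, (B_0,…,B_q) ∈ A^{q+1}. Then the shuffle product of the faces-contraction multilinear maps satisfies ♯(A_0,…,A_p; α) ⧢ ♯(B_0,…,B_q; β) = Σ_{η ∈ Sh(p,q)} ♯(A_0,…,A_{p−1}, A_p·B_0, B_1,…,B_q; η∘(α⊗β)) as multilinear maps A^{p+q} → A. -/

import Mathlib

/-- `η ∈ S_N` is an `(a, N-a)`-shuffle: it is strictly increasing on the first `a`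
positions and on the remaining positions (zero-based positions). -/
def IsShuffle {N : ℕ} (a : ℕ) (η : Equiv.Perm (Fin N)) : Prop :=
  ∀ i j : Fin N, i < j → ((j : ℕ) < a ∨ a ≤ (i : ℕ)) → η i < η j

instance {N a : ℕ} : DecidablePred (fun η : Equiv.Perm (Fin N) => IsShuffle a η) :=
  fun η => by unfold IsShuffle; infer_instance

/-- The finite set `Sh(a, N-a)` of `(a, N-a)`-shuffles inside `S_N`. -/
def shuffles (N a : ℕ) : Finset (Equiv.Perm (Fin N)) :=
  Finset.univ.filter (fun η => IsShuffle a η)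

/-- The block sum `σ ⊗ τ ∈ S_{p+q}` of `σ ∈ S_p` and `τ ∈ S_q`. -/
def blockSum {p q : ℕ} (σ : Equiv.Perm (Fin p)) (τ : Equiv.Perm (Fin q)) :
    Equiv.Perm (Fin (p + q)) :=
  finSumFinEquiv.permCongr (σ.sumCongr τ)

/-- The shuffle product of two multilinear maps `m : A^p → A`, `m' : A^q → A`. -/
def shuffleF {A : Type*} [Ring A] (p q : ℕ)
    (m : (Fin p → A) → A) (m' : (Fin q → A) → A) : (Fin (p + q) → A) → A :=
  fun X => ∑ η ∈ shuffles (p + q) p,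
    m (fun i => X (η (Fin.castAdd q i))) * m' (fun j => X (η (Fin.natAdd p j)))

/-- The faces-contraction multilinear map `♯(A_0,…,A_n; σ) : A^n → A`,
`(X_1,…,X_n) ↦ A_0·X_{σ(1)}·A_1·X_{σ(2)}·A_2 ⋯ X_{σ(n)}·A_n`. -/
def facesContraction {A : Type*} [Ring A] (n : ℕ) (σ : Equiv.Perm (Fin n))
    (As : Fin (n + 1) → A) : (Fin n → A) → A :=
  fun Xs => As 0 * (List.ofFn fun i : Fin n => Xs (σ i) * As i.succ).prod

/-- The concatenated word `(A_0,…,A_{p−1}, A_p·B_0, B_1,…,B_q) ∈ A^{p+q+1}`. -/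
def concatWord {A : Type*} [Mul A] {p q : ℕ} (As : Fin (p + 1) → A)
    (Bs : Fin (q + 1) → A) : Fin (p + q + 1) → A := fun i =>
  if h : (i : ℕ) < p then As ⟨i, by omega⟩
  else if h2 : (i : ℕ) = p then As (Fin.last p) * Bs 0
  else Bs ⟨(i : ℕ) - p, by have := i.isLt; omega⟩

/-!
Both sides are sums over the same shuffles `η`, and the terms agree one by one. Relabelling the
variables by `η` reduces this to `η = 1`, where the product
`(A₀ X_{α 1} A₁ ⋯ X_{α p} A_p) · (B₀ X_{p+β 1} B₁ ⋯ X_{p+β q} B_q)` is, after reassociating,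
the word of `♯(A₀,…,A_p B₀,…,B_q; α ⊗ β)`: the letters `A_p` and `B₀` merge at the seam.
-/

lemma blockSum_castAdd {p q : ℕ} (α : Equiv.Perm (Fin p)) (β : Equiv.Perm (Fin q)) (i : Fin p) :
    blockSum α β (Fin.castAdd q i) = Fin.castAdd q (α i) := by
  simp [blockSum, Equiv.permCongr_apply]

lemma blockSum_natAdd {p q : ℕ} (α : Equiv.Perm (Fin p)) (β : Equiv.Perm (Fin q)) (j : Fin q) :
    blockSum α β (Fin.natAdd p j) = Fin.natAdd p (β j) := by
  simp [blockSum, Equiv.permCongr_apply]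

section interleavedProd

variable {A : Type*} [Ring A]

def interleavedProd {n : ℕ} (a : Fin (n + 1) → A) (x : Fin n → A) : A :=
  a 0 * (List.ofFn fun i => x i * a i.succ).prod

lemma facesContraction_apply (n : ℕ) (σ : Equiv.Perm (Fin n)) (a : Fin (n + 1) → A)
    (x : Fin n → A) : facesContraction n σ a x = interleavedProd a (x ∘ σ) :=
  rfl

lemma facesContraction_mul (n : ℕ) (σ τ : Equiv.Perm (Fin n)) (a : Fin (n + 1) → A)
    (x : Fin n → A) : facesContraction n (σ * τ) a x = facesContraction n τ a (x ∘ σ) :=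
  rfl

lemma interleavedProd_zero (a : Fin 1 → A) (x : Fin 0 → A) : interleavedProd a x = a 0 := by
  simp [interleavedProd]

lemma interleavedProd_cons {n : ℕ} (a₀ : A) (a : Fin (n + 1) → A) (x₀ : A) (x : Fin n → A) :
    interleavedProd (Fin.cons a₀ a) (Fin.cons x₀ x) = a₀ * x₀ * interleavedProd a x := by
  simp [interleavedProd, List.ofFn_succ, mul_assoc]

lemma interleavedProd_update_last {n : ℕ} (a : Fin (n + 1) → A) (x : Fin n → A) (c : A) :
    interleavedProd (Function.update a (Fin.last n) (a (Fin.last n) * c)) x =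
      interleavedProd a x * c := by
  induction n with
  | zero => simp [interleavedProd_zero]
  | succ n ih =>
    rw [← Fin.cons_self_tail a, ← Fin.cons_self_tail x, ← Fin.succ_last, Fin.cons_succ,
      ← Fin.cons_update, interleavedProd_cons, interleavedProd_cons, mul_assoc _ _ c]
    exact congrArg _ (ih ..)

section concatWord

variable {p q : ℕ} (As : Fin (p + 1) → A) (Bs : Fin (q + 1) → A)

lemma concatWord_castLE (i : Fin (p + 1)) :
    concatWord As Bs (Fin.castLE (by omega) i) =
      Function.update As (Fin.last p) (As (Fin.last p) * Bs 0) i := by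
  rcases Fin.eq_castSucc_or_eq_last i with ⟨i, rfl⟩ | rfl
  · simp only [concatWord, Fin.castLE_castSucc, Fin.val_castLE, Fin.is_lt, ↓reduceDIte,
      Fin.castSucc_ne_last, Function.update_of_ne, ne_eq, not_false_eq_true]
    rfl
  · simp [concatWord]

lemma concatWord_natAdd_succ (j : Fin q) : concatWord As Bs (Fin.natAdd p j).succ = Bs j.succ := by
  have hj : ((Fin.natAdd p j).succ : ℕ) = p + j + 1 := rfl
  rw [concatWord, dif_neg (by omega), dif_neg (by omega)]
  congr 1
  ext
  simp only [hj, Fin.val_succ]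
  omega

lemma interleavedProd_concatWord (x : Fin (p + q) → A) :
    interleavedProd As (x ∘ Fin.castAdd q) * interleavedProd Bs (x ∘ Fin.natAdd p) =
      interleavedProd (concatWord As Bs) x := by
  have hMerge : interleavedProd As (x ∘ Fin.castAdd q) * Bs 0 =
      interleavedProd (concatWord As Bs ∘ Fin.castLE (by omega)) (x ∘ Fin.castAdd q) := by
    rw [← interleavedProd_update_last]
    congr 1
    funext i
    exact (concatWord_castLE As Bs i).symm
  rw [interleavedProd.eq_def Bs, ← mul_assoc, hMerge]
  simp only [interleavedProd, List.ofFn_add, List.prod_append, mul_assoc]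
  simp only [Function.comp_apply, concatWord_natAdd_succ]
  rfl

end concatWord

lemma facesContraction_mul_facesContraction {p q : ℕ} (α : Equiv.Perm (Fin p))
    (β : Equiv.Perm (Fin q)) (As : Fin (p + 1) → A) (Bs : Fin (q + 1) → A)
    (x : Fin (p + q) → A) :
    facesContraction p α As (x ∘ Fin.castAdd q) * facesContraction q β Bs (x ∘ Fin.natAdd p) =
      facesContraction (p + q) (blockSum α β) (concatWord As Bs) x := by
  rw [facesContraction_apply, facesContraction_apply, facesContraction_apply,
    ← interleavedProd_concatWord]
  congr 2 <;> funext i <;> simp [blockSum_castAdd, blockSum_natAdd]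

end interleavedProd

theorem facesContraction_shuffle_general {A : Type*} [Ring A] (p q : ℕ)
    (α : Equiv.Perm (Fin p)) (β : Equiv.Perm (Fin q))
    (As : Fin (p + 1) → A) (Bs : Fin (q + 1) → A) :
    shuffleF p q (facesContraction p α As) (facesContraction q β Bs) =
      fun Xs => ∑ η ∈ shuffles (p + q) p,
        facesContraction (p + q) (η * blockSum α β) (concatWord As Bs) Xs := by
  funext Xs
  refine Finset.sum_congr rfl fun η _ => ?_
  rw [facesContraction_mul]
  exact facesContraction_mul_facesContraction α β As Bs (Xs ∘ η)

/-- morphism property of the faces-contraction map: on a unital associative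
`ℂ`-algebra `A`, for `α ∈ S_p`, `β ∈ S_q` and words `(A_0,…,A_p)`, `(B_0,…,B_q)`,
`♯(A_0,…,A_p; α) ⧢ ♯(B_0,…,B_q; β) =
  Σ_{η ∈ Sh(p,q)} ♯(A_0,…,A_{p−1}, A_p·B_0, B_1,…,B_q; η∘(α⊗β))`
as multilinear maps `A^{p+q} → A`. -/
theorem facesContraction_shuffle {A : Type*} [Ring A] [Algebra ℂ A] (p q : ℕ)
    (hp : 1 ≤ p) (hq : 1 ≤ q) (α : Equiv.Perm (Fin p)) (β : Equiv.Perm (Fin q))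
    (As : Fin (p + 1) → A) (Bs : Fin (q + 1) → A) :
    shuffleF p q (facesContraction p α As) (facesContraction q β Bs) =
      fun Xs => ∑ η ∈ shuffles (p + q) p,
        facesContraction (p + q) (η * blockSum α β) (concatWord As Bs) Xs :=
  facesContraction_shuffle_general p q α β As Bs
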